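/- For each positive integer k, let f(t) = (((1+t)^4 + (k−1)t^4)/k)^{1/4}. There exist a unique α_k < 0 and a unique β_k > 0 such that f(α_k) = f(β_k) = (2/k)^{1/4}; moreover α_k < −k^{−1/4} and β_k < k^{−1/4}. -/

import Mathlib

/-!
Write `f k t = (g t / k)^{1/4}` with `g t = (1 + t)⁴ + (k - 1) t⁴`, so the equation is `g t = 2`.
Since `k ≥ 1`, `g` is strictly convex, and `g 0 = 1 < 2`; by strict convexity the level `2` is
attained at most once on each side of `0`, and the intermediate value theorem gives a root on
each side. For `a = k^{-1/4}` one has `k a⁴ = 1`, hence `g (±a) = (1 ± a)⁴ + 1 - a⁴`, so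
`g (-a) < 2 < g a`. Convexity of `g` on `[-a, 0]` and on `[0, β]` then forces `α < -a` and `β < a`.
-/

open Set

noncomputable def f (k : ℕ) (t : ℝ) : ℝ :=
  (((1 + t) ^ 4 + ((k : ℝ) - 1) * t ^ 4) / (k : ℝ)) ^ ((1 : ℝ) / 4)

section ConvexLevelSets

variable {g : ℝ → ℝ} {p r : ℝ}

theorem StrictConvexOn.subsingleton_Ioi_apply_eq (hg : StrictConvexOn ℝ univ g) (hp : g p ≤ r) :
    {x | p < x ∧ g x = r}.Subsingleton := by
  suffices ∀ x y, p < x → x < y → g x = r → g y ≠ r by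
    rintro x ⟨hpx, hx⟩ y ⟨hpy, hy⟩
    by_contra hne
    rcases lt_or_gt_of_ne hne with hxy | hyx
    exacts [this x y hpx hxy hx hy, this y x hpy hyx hy hx]
  intro x y hpx hxy hx hy
  have hmem : x ∈ openSegment ℝ p y := by
    rw [openSegment_eq_Ioo (hpx.trans hxy)]; exact ⟨hpx, hxy⟩
  have := hg.lt_on_openSegment (mem_univ p) (mem_univ y) (hpx.trans hxy).ne hmem
  rw [hx, hy, max_eq_right hp] at this
  exact this.false

theorem StrictConvexOn.subsingleton_Iio_apply_eq (hg : StrictConvexOn ℝ univ g) (hp : g p ≤ r) :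
    {x | x < p ∧ g x = r}.Subsingleton := by
  suffices ∀ x y, y < p → x < y → g x = r → g y ≠ r by
    rintro x ⟨hxp, hx⟩ y ⟨hyp, hy⟩
    by_contra hne
    rcases lt_or_gt_of_ne hne with hxy | hyx
    exacts [this x y hyp hxy hx hy, this y x hxp hyx hy hx]
  intro x y hyp hxy hx hy
  have hmem : y ∈ openSegment ℝ x p := by
    rw [openSegment_eq_Ioo (hxy.trans hyp)]; exact ⟨hxy, hyp⟩
  have := hg.lt_on_openSegment (mem_univ x) (mem_univ p) (hxy.trans hyp).ne hmem
  rw [hx, hy, max_eq_left hp] at this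
  exact this.false

theorem ConvexOn.lt_of_apply_eq_of_lt_apply (hg : ConvexOn ℝ univ g) (hp : g p ≤ r) {b x : ℝ}
    (hpb : p ≤ b) (hb : r < g b) (hx : g x = r) : x < b := by
  by_contra! hbx
  have := hg.le_on_segment (mem_univ p) (mem_univ x)
    (by rw [segment_eq_Icc (hpb.trans hbx)]; exact ⟨hpb, hbx⟩)
  rw [hx, max_eq_right hp] at this
  exact this.not_gt hb

theorem ConvexOn.lt_of_apply_eq_of_apply_lt (hg : ConvexOn ℝ univ g) (hp : g p < r) {b x : ℝ}
    (hbp : b ≤ p) (hb : g b < r) (hxp : x ≤ p) (hx : g x = r) : x < b := by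
  by_contra! hbx
  have := hg.le_on_segment (mem_univ b) (mem_univ p)
    (by rw [segment_eq_Icc hbp]; exact ⟨hbx, hxp⟩)
  rw [hx] at this
  exact this.not_gt (max_lt hb hp)

end ConvexLevelSets

def radicand (c t : ℝ) : ℝ := (1 + t) ^ 4 + (c - 1) * t ^ 4

section Radicand

variable {c : ℝ}

theorem f_eq_rpow_radicand (k : ℕ) (t : ℝ) : f k t = (radicand k t / k) ^ ((1 : ℝ) / 4) := rfl

theorem radicand_zero (c : ℝ) : radicand c 0 = 1 := by simp [radicand]

theorem radicand_nonneg (hc : 1 ≤ c) (t : ℝ) : 0 ≤ radicand c t := by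
  unfold radicand
  have : 0 ≤ c - 1 := by linarith
  positivity

theorem continuous_radicand (c : ℝ) : Continuous (radicand c) := by
  unfold radicand; fun_prop

theorem strictConvexOn_radicand (hc : 1 ≤ c) : StrictConvexOn ℝ univ (radicand c) := by
  have hshift : StrictConvexOn ℝ univ fun t : ℝ => (1 + t) ^ 4 := by
    have := (Even.strictConvexOn_pow (n := 4) (by decide) (by decide)).translate_right (1 : ℝ)
    rwa [preimage_univ] at this
  exact hshift.add_convexOn ((Even.convexOn_pow (n := 4) (by decide)).smul (by linarith))

theorem radicand_of_mul_pow_four_eq_one {t : ℝ} (h : c * t ^ 4 = 1) :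
    radicand c t = (1 + t) ^ 4 + 1 - t ^ 4 := by
  unfold radicand; linear_combination h

theorem radicand_neg_lt_two {a : ℝ} (ha : 0 < a) (h : c * a ^ 4 = 1) : radicand c (-a) < 2 := by
  rw [radicand_of_mul_pow_four_eq_one (by rwa [Even.neg_pow (by decide)])]
  nlinarith [sq_nonneg (2 * a - 3 / 2)]

theorem two_lt_radicand {a : ℝ} (ha : 0 < a) (h : c * a ^ 4 = 1) : 2 < radicand c a := by
  rw [radicand_of_mul_pow_four_eq_one h]
  nlinarith [pow_pos ha 2, pow_pos ha 3]

theorem exists_neg_radicand_eq_two (hc : 1 ≤ c) : ∃ t < 0, radicand c t = 2 := by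
  obtain ⟨t, ht, hgt⟩ := intermediate_value_Ioo' (by norm_num : (-3 : ℝ) ≤ 0)
    (continuous_radicand c).continuousOn
    (show (2 : ℝ) ∈ Ioo (radicand c 0) (radicand c (-3)) by
      rw [radicand_zero]; norm_num [radicand]; linarith)
  exact ⟨t, ht.2, hgt⟩

theorem exists_pos_radicand_eq_two (hc : 1 ≤ c) : ∃ t > 0, radicand c t = 2 := by
  obtain ⟨t, ht, hgt⟩ := intermediate_value_Ioo (by norm_num : (0 : ℝ) ≤ 1)
    (continuous_radicand c).continuousOn
    (show (2 : ℝ) ∈ Ioo (radicand c 0) (radicand c 1) by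
      rw [radicand_zero]; norm_num [radicand]; linarith)
  exact ⟨t, ht.1, hgt⟩

end Radicand

theorem f_eq_iff_radicand_eq_two {k : ℕ} (hk : 1 ≤ k) (t : ℝ) :
    f k t = (2 / (k : ℝ)) ^ ((1 : ℝ) / 4) ↔ radicand k t = 2 := by
  have hc : (1 : ℝ) ≤ k := by exact_mod_cast hk
  have hc0 : (k : ℝ) ≠ 0 := by positivity
  rw [f_eq_rpow_radicand, Real.rpow_left_inj (div_nonneg (radicand_nonneg hc t) (by positivity))
    (by positivity) (by norm_num), div_left_inj' hc0]

theorem mul_rpow_neg_quarter_pow_four {c : ℝ} (hc : 0 < c) :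
    c * (c ^ (-(1 : ℝ) / 4)) ^ 4 = 1 := by
  rw [← Real.rpow_natCast, ← Real.rpow_mul hc.le]
  norm_num [Real.rpow_neg_one, hc.ne']

/-- There is a unique `α_k < 0` and a unique `β_k > 0` with
`f(α_k) = f(β_k) = (2/k)^{1/4}`, and moreover `α_k < -k^{-1/4}` and `β_k < k^{-1/4}`. -/
theorem stmt15 (k : ℕ) (hk : 1 ≤ k) :
    (∃! α : ℝ, α < 0 ∧ f k α = (2 / (k : ℝ)) ^ ((1 : ℝ) / 4)) ∧
    (∃! β : ℝ, 0 < β ∧ f k β = (2 / (k : ℝ)) ^ ((1 : ℝ) / 4)) ∧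
    (∀ α : ℝ, α < 0 → f k α = (2 / (k : ℝ)) ^ ((1 : ℝ) / 4) →
      α < -(k : ℝ) ^ (-(1 : ℝ) / 4)) ∧
    (∀ β : ℝ, 0 < β → f k β = (2 / (k : ℝ)) ^ ((1 : ℝ) / 4) →
      β < (k : ℝ) ^ (-(1 : ℝ) / 4)) := by
  have hc : (1 : ℝ) ≤ k := by exact_mod_cast hk
  have hg := strictConvexOn_radicand hc
  have h0 : radicand k 0 < 2 := by rw [radicand_zero]; norm_num
  have ha : 0 < (k : ℝ) ^ (-(1 : ℝ) / 4) := by positivity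
  have hka := mul_rpow_neg_quarter_pow_four (by positivity : (0 : ℝ) < k)
  simp only [f_eq_iff_radicand_eq_two hk]
  obtain ⟨α, hα, hgα⟩ := exists_neg_radicand_eq_two hc
  obtain ⟨β, hβ, hgβ⟩ := exists_pos_radicand_eq_two hc
  refine ⟨⟨α, ⟨hα, hgα⟩, fun x hx => hg.subsingleton_Iio_apply_eq h0.le hx ⟨hα, hgα⟩⟩,
    ⟨β, ⟨hβ, hgβ⟩, fun x hx => hg.subsingleton_Ioi_apply_eq h0.le hx ⟨hβ, hgβ⟩⟩,
    fun x hx hgx => ?_, fun x _ hgx => ?_⟩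
  · exact hg.convexOn.lt_of_apply_eq_of_apply_lt h0 (by linarith) (radicand_neg_lt_two ha hka)
      hx.le hgx
  · exact hg.convexOn.lt_of_apply_eq_of_lt_apply h0.le ha.le (two_lt_radicand ha hka) hgx
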